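/- Weighted maximum-principle comparison: let Ω ⊂ ℝ^{N+l} be an unbounded domain contained in {d(z,0) > R₀}, 0 < b < N_γ − 2, and let ω satisfy −Δ_γ ω + c(z) ω ≤ 0 in Ω, ω ≤ 0 on ∂Ω, where c(z) > −b(N_γ−2−b)|x|^{2γ} / ((1+γ)² d(z,0)^{2+2γ}) for d(z,0) ≥ R₀, and ω(z) d(z,0)^b → 0 as d(z,0) → ∞. Then ω ≤ 0 in Ω. -/

import Mathlib

open MeasureTheory Filter

abbrev GSp (N l : ℕ) := (Fin N → ℝ) × (Fin l → ℝ)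

/-- Euclidean norm on `Fin n → ℝ`. -/
noncomputable def xnorm {n : ℕ} (x : Fin n → ℝ) : ℝ := Real.sqrt (∑ i, x i ^ 2)

/-- The Grushin (quasi-)distance to the origin. -/
noncomputable def gdist {N l : ℕ} (γ : ℝ) (z : GSp N l) : ℝ :=
  ((1 / (1 + γ) ^ 2) * xnorm z.1 ^ (2 + 2 * γ) + xnorm z.2 ^ 2) ^ (1 / (2 + 2 * γ))

/-- Second derivative of `u` at `z` in direction `v`. -/
noncomputable def deriv2 {N l : ℕ} (u : GSp N l → ℝ) (z v : GSp N l) : ℝ :=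
  iteratedFDeriv ℝ 2 u z ![v, v]

/-- The Grushin operator `Δ_γ u = Δ_x u + |x|^{2γ} Δ_y u`. -/
noncomputable def grushin {N l : ℕ} (γ : ℝ) (u : GSp N l → ℝ) (z : GSp N l) : ℝ :=
  (∑ i, deriv2 u z (Pi.single i 1, 0)) +
    xnorm z.1 ^ (2 * γ) * ∑ j, deriv2 u z (0, Pi.single j 1)

/-- The homogeneous dimension `N_γ = N + (1+γ)l`. -/
noncomputable def Ngamma (N l : ℕ) (γ : ℝ) : ℝ := N + (1 + γ) * l

/-- The Grushin Kelvin inversion `z ↦ (d(z,0)^{-2} x, d(z,0)^{-2-2γ} y)`. -/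
noncomputable def kelvin {N l : ℕ} (γ : ℝ) (z : GSp N l) : GSp N l :=
  (gdist γ z ^ (-2 : ℝ) • z.1, gdist γ z ^ (-(2 + 2 * γ)) • z.2)

/-- Membership in the weighted Sobolev space `H^{1,2}_γ` over a set `S`. -/
def MemHgammaOn {N l : ℕ} (γ : ℝ) (u : GSp N l → ℝ) (S : Set (GSp N l)) : Prop :=
  MemLp u 2 (volume.restrict S) ∧
  (∀ i : Fin N, MemLp (fun z => fderiv ℝ u z (Pi.single i 1, 0)) 2 (volume.restrict S)) ∧
  (∀ j : Fin l, MemLp (fun z => xnorm z.1 ^ γ * fderiv ℝ u z (0, Pi.single j 1)) 2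
    (volume.restrict S))

/-- Membership in the weighted Sobolev space `H^{1,2}_γ(ℝ^{N+l})`. -/
def MemHgamma {N l : ℕ} (γ : ℝ) (u : GSp N l → ℝ) : Prop :=
  MemHgammaOn γ u Set.univ

/-!
Suppose `ω > 0` somewhere in `Ω`. The weighted function `w = ω d^b` is continuous, tends to `0`
at infinity and is `≤ 0` on `∂Ω`, so it attains a positive maximum `M` over `closure Ω` at some
`z₀ ∈ Ω`. Then `ω - M d^{-b}` is `≤ 0` on `Ω` and vanishes at `z₀`, so its second derivatives at
`z₀` are `≤ 0` and `Δ_γ ω (z₀) ≤ M Δ_γ (d^{-b}) (z₀) = K(z₀) ω(z₀)`, where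
`K = -b (N_γ - 2 - b) |x|^{2γ} / ((1+γ)² d^{2+2γ})`. The differential inequality then gives
`c(z₀) ω(z₀) ≤ K(z₀) ω(z₀)`, contradicting `c > K` and `ω(z₀) > 0`.

`Δ_γ (d^a)` is computed from `ρ = d^{2+2γ} = |x|^{2+2γ} / (1+γ)² + |y|²`. The first derivative of
`ρ` involves `z ↦ |x|^{2γ} ⟨x, ·⟩`, which is differentiable also where `x = 0` (with derivative
`0`) because `γ > 0`, even though `|x|^{2γ}` alone need not be.
-/

open Topology Asymptotics

theorem IsLocalMax.deriv_deriv_nonpos {g : ℝ → ℝ} {a : ℝ} (hmax : IsLocalMax g a)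
    (hc : ContinuousAt g a) : deriv (deriv g) a ≤ 0 := by
  by_contra! hpos
  have hmin := isLocalMin_of_deriv_deriv_pos hpos hmax.deriv_eq_zero hc
  have hconst : g =ᶠ[𝓝 a] fun _ => g a :=
    (hmin.and hmax).mono fun t ht => le_antisymm ht.2 ht.1
  have : deriv (deriv g) a = 0 := by
    rw [hconst.deriv.deriv_eq]
    simp
  exact hpos.ne' this

theorem IsLocalMax.fderiv_fderiv_apply_self_nonpos {E : Type*} [NormedAddCommGroup E]
    [NormedSpace ℝ E] {f : E → ℝ} {z₀ : E} (hmax : IsLocalMax f z₀)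
    (hf : ∀ᶠ z in 𝓝 z₀, DifferentiableAt ℝ f z) (hf2 : DifferentiableAt ℝ (fderiv ℝ f) z₀)
    (v : E) : fderiv ℝ (fderiv ℝ f) z₀ v v ≤ 0 := by
  set L : ℝ → E := fun t => z₀ + t • v
  have hL : ∀ t, HasDerivAt L v t := fun t =>
    (((hasDerivAt_id t).smul_const v).const_add z₀).congr_deriv (one_smul ℝ v)
  have hL0 : L 0 = z₀ := by simp [L]
  have hLt : Tendsto L (𝓝 0) (𝓝 z₀) := hL0 ▸ (hL 0).continuousAt.tendsto
  have hderiv : deriv (f ∘ L) =ᶠ[𝓝 0] fun t => fderiv ℝ f (L t) v :=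
    (hLt.eventually hf).mono fun t ht => (ht.hasFDerivAt.comp_hasDerivAt t (hL t)).deriv
  have hderiv2 : HasDerivAt (fun t => fderiv ℝ f (L t) v) (fderiv ℝ (fderiv ℝ f) z₀ v v) 0 := by
    rw [← hL0] at hf2 ⊢
    exact (ContinuousLinearMap.apply ℝ ℝ v).hasFDerivAt.comp_hasDerivAt 0
      (hf2.hasFDerivAt.comp_hasDerivAt 0 (hL 0))
  rw [← hderiv2.deriv, ← hderiv.deriv_eq]
  rw [← hL0] at hmax hf
  exact (hmax.comp_continuous (hL 0).continuousAt).deriv_deriv_nonpos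
    (hf.self_of_nhds.continuousAt.comp (hL 0).continuousAt)

theorem Real.rpow_sub_one_mul_self {x : ℝ} (hx : 0 ≤ x) {a : ℝ} (ha : a ≠ 0) :
    x ^ (a - 1) * x = x ^ a := by
  rw [← Real.rpow_add_one' hx (by simpa using ha), sub_add_cancel]

theorem IsOpen.exists_mem_isMaxOn_closure {X : Type*} [TopologicalSpace X] {U : Set X}
    (hU : IsOpen U) {f : X → ℝ} (hf : ContinuousOn f (closure U))
    (hlim : Tendsto f (cocompact X) (𝓝 0)) (hfr : ∀ x ∈ frontier U, f x ≤ 0) {x₁ : X}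
    (hx₁ : x₁ ∈ U) (hpos : 0 < f x₁) : ∃ x₀ ∈ U, IsMaxOn f (closure U) x₀ := by
  have hsmall : ∀ᶠ x in cocompact X ⊓ 𝓟 (closure U), f x ≤ f x₁ :=
    inf_le_left (α := Filter X) ((hlim.eventually (gt_mem_nhds hpos)).mono fun _ => le_of_lt)
  obtain ⟨x₀, hx₀, hmax⟩ := hf.exists_isMaxOn' isClosed_closure (subset_closure hx₁) hsmall
  refine ⟨x₀, ?_, hmax⟩
  by_contra hx₀U
  have := hfr x₀ (by rw [hU.frontier_eq]; exact ⟨hx₀, hx₀U⟩)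
  have : f x₁ ≤ f x₀ := hmax (subset_closure hx₁)
  linarith

theorem ContinuousLinearMap.hasFDerivAt_apply_self {𝕜 E F : Type*} [NontriviallyNormedField 𝕜]
    [NormedAddCommGroup E] [NormedSpace 𝕜 E] [NormedAddCommGroup F] [NormedSpace 𝕜 F]
    (B : E →L[𝕜] E →L[𝕜] F) (hB : ∀ u v, B u v = B v u) (z : E) :
    HasFDerivAt (fun z => B z z) ((2 : 𝕜) • B z) z := by
  refine (B.hasFDerivAt_of_bilinear (hasFDerivAt_id z) (hasFDerivAt_id z)).congr_fderiv ?_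
  ext v
  simp [two_smul, hB v z]

theorem norm_le_xnorm {n : ℕ} (x : Fin n → ℝ) : ‖x‖ ≤ xnorm x :=
  (pi_norm_le_iff_of_nonneg (Real.sqrt_nonneg _)).2 fun i =>
    Real.abs_le_sqrt (Finset.single_le_sum (fun j _ => sq_nonneg (x j)) (Finset.mem_univ i))

theorem xnorm_nonneg {n : ℕ} (x : Fin n → ℝ) : 0 ≤ xnorm x := Real.sqrt_nonneg _

theorem xnorm_sq {n : ℕ} (x : Fin n → ℝ) : xnorm x ^ 2 = ∑ i, x i ^ 2 :=
  Real.sq_sqrt (Finset.sum_nonneg fun _ _ => sq_nonneg _)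

theorem xnorm_rpow_two_mul {n : ℕ} (x : Fin n → ℝ) (e : ℝ) :
    xnorm x ^ (2 * e) = (∑ i, x i ^ 2) ^ e := by
  rw [xnorm, Real.sqrt_eq_rpow, ← Real.rpow_mul (Finset.sum_nonneg fun i _ => sq_nonneg _)]
  ring_nf

namespace Grushin

variable {N l : ℕ} {γ : ℝ}

def normSqX (z : GSp N l) : ℝ := ∑ i, z.1 i ^ 2

def normSqY (z : GSp N l) : ℝ := ∑ j, z.2 j ^ 2

noncomputable def rho (γ : ℝ) (z : GSp N l) : ℝ :=
  1 / (1 + γ) ^ 2 * normSqX z ^ (1 + γ) + normSqY z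

noncomputable def innerX : GSp N l →L[ℝ] GSp N l →L[ℝ] ℝ :=
  ∑ i, ((ContinuousLinearMap.proj i).comp (ContinuousLinearMap.fst ℝ _ _)).smulRight
    ((ContinuousLinearMap.proj i).comp (ContinuousLinearMap.fst ℝ _ _))

noncomputable def innerY : GSp N l →L[ℝ] GSp N l →L[ℝ] ℝ :=
  ∑ j, ((ContinuousLinearMap.proj j).comp (ContinuousLinearMap.snd ℝ _ _)).smulRight
    ((ContinuousLinearMap.proj j).comp (ContinuousLinearMap.snd ℝ _ _))

@[simp] theorem innerX_apply (z v : GSp N l) : innerX z v = ∑ i, z.1 i * v.1 i := by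
  simp [innerX]

@[simp] theorem innerY_apply (z v : GSp N l) : innerY z v = ∑ j, z.2 j * v.2 j := by
  simp [innerY]

theorem normSqX_nonneg (z : GSp N l) : 0 ≤ normSqX z :=
  Finset.sum_nonneg fun _ _ => sq_nonneg _

theorem normSqY_nonneg (z : GSp N l) : 0 ≤ normSqY z :=
  Finset.sum_nonneg fun _ _ => sq_nonneg _

theorem rho_nonneg (z : GSp N l) : 0 ≤ rho γ z :=
  add_nonneg (mul_nonneg (by positivity) (Real.rpow_nonneg (normSqX_nonneg z) _))
    (normSqY_nonneg z)

theorem rho_eq (z : GSp N l) :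
    rho γ z = 1 / (1 + γ) ^ 2 * xnorm z.1 ^ (2 + 2 * γ) + xnorm z.2 ^ 2 := by
  rw [show (2 : ℝ) + 2 * γ = 2 * (1 + γ) by ring, xnorm_rpow_two_mul, xnorm_sq, rho, normSqX,
    normSqY]

theorem gdist_eq_rho_rpow (z : GSp N l) : gdist γ z = rho γ z ^ (1 / (2 + 2 * γ)) := by
  rw [gdist, rho_eq]

theorem gdist_nonneg (z : GSp N l) : 0 ≤ gdist γ z :=
  gdist_eq_rho_rpow (γ := γ) z ▸ Real.rpow_nonneg (rho_nonneg z) _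

theorem gdist_rpow (a : ℝ) (z : GSp N l) :
    gdist γ z ^ a = rho γ z ^ (a / (2 + 2 * γ)) := by
  rw [gdist_eq_rho_rpow, ← Real.rpow_mul (rho_nonneg z)]
  field_simp

theorem gdist_rpow_two_add_two_mul (hγ : 0 < γ) (z : GSp N l) :
    gdist γ z ^ (2 + 2 * γ) = rho γ z := by
  rw [gdist_rpow, div_self (by positivity), Real.rpow_one]

theorem continuous_normSqX : Continuous (normSqX (N := N) (l := l)) := by
  unfold normSqX
  fun_prop

theorem continuous_rho (hγ : 0 < γ) : Continuous (rho (N := N) (l := l) γ) := by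
  unfold rho normSqY
  exact (continuous_const.mul ((Real.continuous_rpow_const (by positivity)).comp
    continuous_normSqX)).add (by fun_prop)

theorem continuous_gdist (hγ : 0 < γ) : Continuous (gdist (N := N) (l := l) γ) := by
  simp_rw [funext (gdist_eq_rho_rpow (γ := γ) (N := N) (l := l))]
  exact (Real.continuous_rpow_const (by positivity)).comp (continuous_rho hγ)

theorem isBounded_gdist_le (hγ : 0 < γ) (R : ℝ) :
    Bornology.IsBounded {z : GSp N l | gdist γ z ≤ R} := by
  rw [Metric.isBounded_iff_subset_closedBall 0]
  refine ⟨max (((1 + γ) ^ 2 * R ^ (2 + 2 * γ)) ^ (2 + 2 * γ)⁻¹) √(R ^ (2 + 2 * γ)),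
    fun z (hz : gdist γ z ≤ R) => ?_⟩
  have hρ : rho γ z ≤ R ^ (2 + 2 * γ) := by
    have := Real.rpow_le_rpow (gdist_nonneg z) hz (by positivity : (0 : ℝ) ≤ 2 + 2 * γ)
    rwa [gdist_rpow_two_add_two_mul hγ] at this
  rw [rho_eq] at hρ
  have hR : 0 ≤ R := (gdist_nonneg z).trans hz
  have hx := Real.rpow_nonneg (xnorm_nonneg z.1) (2 + 2 * γ)
  rw [mem_closedBall_zero_iff, Prod.norm_def]
  refine max_le_max ((norm_le_xnorm _).trans ?_) ((norm_le_xnorm _).trans ?_)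
  · rw [Real.le_rpow_inv_iff_of_pos (xnorm_nonneg _) (by positivity) (by positivity)]
    have h1 : 1 / (1 + γ) ^ 2 * xnorm z.1 ^ (2 + 2 * γ) ≤ R ^ (2 + 2 * γ) := by
      nlinarith [sq_nonneg (xnorm z.2)]
    rwa [one_div, inv_mul_le_iff₀ (by positivity)] at h1
  · refine (Real.le_sqrt (xnorm_nonneg _) (by positivity)).2 ?_
    nlinarith [mul_nonneg (by positivity : (0 : ℝ) ≤ 1 / (1 + γ) ^ 2) hx]

theorem tendsto_gdist_cocompact (hγ : 0 < γ) :
    Tendsto (gdist (N := N) (l := l) γ) (cocompact _) atTop := by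
  refine tendsto_atTop.2 fun R => ?_
  have hK : IsCompact {z : GSp N l | gdist γ z ≤ R} :=
    Metric.isCompact_of_isClosed_isBounded (isClosed_le (continuous_gdist hγ) continuous_const)
      (isBounded_gdist_le hγ R)
  filter_upwards [hK.compl_mem_cocompact] with z (hz : ¬ gdist γ z ≤ R)
  exact (not_le.1 hz).le

theorem normSqX_eq (z : GSp N l) : normSqX z = innerX z z := by
  simp [normSqX, sq]

theorem normSqY_eq (z : GSp N l) : normSqY z = innerY z z := by
  simp [normSqY, sq]

theorem hasFDerivAt_normSqX (z : GSp N l) : HasFDerivAt normSqX ((2 : ℝ) • innerX z) z := by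
  simp_rw [funext normSqX_eq]
  exact innerX.hasFDerivAt_apply_self (fun u v => by simp [mul_comm]) z

theorem hasFDerivAt_normSqY (z : GSp N l) : HasFDerivAt normSqY ((2 : ℝ) • innerY z) z := by
  simp_rw [funext normSqY_eq]
  exact innerY.hasFDerivAt_apply_self (fun u v => by simp [mul_comm]) z

theorem innerX_eq_zero_of_normSqX_eq_zero {z : GSp N l} (h : normSqX z = 0) : innerX z = 0 := by
  have hx : ∀ i, z.1 i = 0 := fun i => by
    simpa using (Finset.sum_eq_zero_iff_of_nonneg fun j _ => sq_nonneg (z.1 j)).1 h i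
  exact ContinuousLinearMap.ext fun v => by simp [hx]

/-- At `x₀ = 0` the junk value of `0 ^ (γ - 1)` is harmless: it multiplies `innerX z₀ = 0`. -/
theorem hasFDerivAt_normSqX_rpow_smul_innerX (hγ : 0 < γ) (z₀ : GSp N l) :
    HasFDerivAt (fun z => normSqX z ^ γ • innerX z)
      (normSqX z₀ ^ γ • innerX +
        (2 * γ * normSqX z₀ ^ (γ - 1)) • (innerX z₀).smulRight (innerX z₀)) z₀ := by
  rcases (normSqX_nonneg z₀).eq_or_lt with h0 | hpos
  · have hx := innerX_eq_zero_of_normSqX_eq_zero h0.symm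
    refine HasFDerivAt.congr_fderiv (f' := 0) ?_
      (ContinuousLinearMap.ext fun v => ContinuousLinearMap.ext fun w => by simp [hx, ← h0, hγ.ne'])
    rw [hasFDerivAt_iff_isLittleO]
    have hsmall : (fun z => normSqX z ^ γ) =o[𝓝 z₀] (fun _ => (1 : ℝ)) := by
      refine (isLittleO_one_iff ℝ).2 ?_
      have hcont : Continuous fun z : GSp N l => normSqX z ^ γ :=
        (Real.continuous_rpow_const hγ.le).comp continuous_normSqX
      simpa [← h0, hγ.ne'] using hcont.tendsto z₀
    have hlin : (fun z => innerX z) =O[𝓝 z₀] (fun z => z - z₀) := by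
      simpa [hx] using innerX.isBigO_sub (𝓝 z₀) z₀
    simpa [← h0, Real.zero_rpow hγ.ne'] using hsmall.smul_isBigO hlin
  · refine (((Real.hasDerivAt_rpow_const (p := γ) (Or.inl hpos.ne')).comp_hasFDerivAt z₀
      (hasFDerivAt_normSqX z₀)).smul innerX.hasFDerivAt).congr_fderiv ?_
    refine ContinuousLinearMap.ext fun v => ContinuousLinearMap.ext fun w => ?_
    simp
    ring

noncomputable def Drho (γ : ℝ) (z : GSp N l) : GSp N l →L[ℝ] ℝ :=
  (2 / (1 + γ)) • (normSqX z ^ γ • innerX z) + (2 : ℝ) • innerY z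

noncomputable def Hrho (γ : ℝ) (z : GSp N l) : GSp N l →L[ℝ] GSp N l →L[ℝ] ℝ :=
  (2 / (1 + γ)) • (normSqX z ^ γ • innerX +
    (2 * γ * normSqX z ^ (γ - 1)) • (innerX z).smulRight (innerX z)) + (2 : ℝ) • innerY

theorem hasFDerivAt_rho (hγ : 0 < γ) (z : GSp N l) : HasFDerivAt (rho γ) (Drho γ z) z := by
  have h := (Real.hasDerivAt_rpow_const (p := 1 + γ) (Or.inr (by linarith))).comp_hasFDerivAt z
    (hasFDerivAt_normSqX z)
  refine ((h.const_mul (1 / (1 + γ) ^ 2)).add (hasFDerivAt_normSqY z)).congr_fderiv ?_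
  refine ContinuousLinearMap.ext fun v => ?_
  simp [Drho]
  field_simp

theorem hasFDerivAt_Drho (hγ : 0 < γ) (z : GSp N l) : HasFDerivAt (Drho γ) (Hrho γ z) z :=
  ((hasFDerivAt_normSqX_rpow_smul_innerX hγ z).const_smul (2 / (1 + γ))).add
    (innerY.hasFDerivAt.const_smul (2 : ℝ))

theorem hasFDerivAt_rho_rpow (hγ : 0 < γ) (p : ℝ) {z : GSp N l} (hz : 0 < rho γ z) :
    HasFDerivAt (fun z => rho γ z ^ p) ((p * rho γ z ^ (p - 1)) • Drho γ z) z :=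
  (Real.hasDerivAt_rpow_const (Or.inl hz.ne')).comp_hasFDerivAt z (hasFDerivAt_rho hγ z)

theorem hasFDerivAt_fderiv_rho_rpow (hγ : 0 < γ) (p : ℝ) {z₀ : GSp N l} (hz₀ : 0 < rho γ z₀) :
    HasFDerivAt (fderiv ℝ fun z => rho γ z ^ p)
      ((p * rho γ z₀ ^ (p - 1)) • Hrho γ z₀ +
        ((p * ((p - 1) * rho γ z₀ ^ (p - 1 - 1))) • Drho γ z₀).smulRight (Drho γ z₀)) z₀ := by
  have hpos : ∀ᶠ z in 𝓝 z₀, 0 < rho γ z := (continuous_rho hγ).continuousAt.eventually_const_lt hz₀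
  have hD : HasFDerivAt (fun z => p * rho γ z ^ (p - 1))
      ((p * ((p - 1) * rho γ z₀ ^ (p - 1 - 1))) • Drho γ z₀) z₀ :=
    ((Real.hasDerivAt_rpow_const (Or.inl hz₀.ne')).const_mul p).comp_hasFDerivAt z₀
      (hasFDerivAt_rho hγ z₀)
  exact (hD.smul (hasFDerivAt_Drho hγ z₀)).congr_of_eventuallyEq
    (hpos.mono fun z hz => (hasFDerivAt_rho_rpow hγ p hz).fderiv)

theorem sum_Hrho_fst (hγ : 0 < γ) (z : GSp N l) :
    ∑ i : Fin N, Hrho γ z (Pi.single i 1, 0) (Pi.single i 1, 0) =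
      2 / (1 + γ) * (N + 2 * γ) * normSqX z ^ γ := by
  have h : ∀ i, Hrho γ z (Pi.single i 1, 0) (Pi.single i 1, 0) =
      2 / (1 + γ) * normSqX z ^ γ + 4 * γ / (1 + γ) * normSqX z ^ (γ - 1) * z.1 i ^ 2 := by
    intro i
    simp [Hrho, Pi.single_apply]
    ring
  simp only [Finset.sum_congr rfl fun i _ => h i, Finset.sum_add_distrib, Finset.sum_const,
    Finset.card_univ, Fintype.card_fin, nsmul_eq_mul, ← Finset.mul_sum]
  rw [show ∑ i, z.1 i ^ 2 = normSqX z from rfl, mul_assoc _ (normSqX z ^ (γ - 1)),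
    Real.rpow_sub_one_mul_self (normSqX_nonneg z) hγ.ne']
  ring

theorem sum_Drho_fst_sq (z : GSp N l) :
    ∑ i : Fin N, Drho γ z (Pi.single i 1, 0) ^ 2 =
      (2 / (1 + γ) * normSqX z ^ γ) ^ 2 * normSqX z := by
  have h : ∀ i, Drho γ z (Pi.single i 1, 0) ^ 2 =
      (2 / (1 + γ) * normSqX z ^ γ) ^ 2 * z.1 i ^ 2 := by
    intro i
    simp [Drho, Pi.single_apply]
    ring
  rw [Finset.sum_congr rfl fun i _ => h i, ← Finset.mul_sum]
  rfl

theorem sum_Hrho_snd (z : GSp N l) :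
    ∑ j : Fin l, Hrho γ z (0, Pi.single j 1) (0, Pi.single j 1) = 2 * l := by
  simp [Hrho, Pi.single_apply, mul_comm]

theorem sum_Drho_snd_sq (z : GSp N l) :
    ∑ j : Fin l, Drho γ z (0, Pi.single j 1) ^ 2 = 4 * normSqY z := by
  have h : ∀ j, Drho γ z (0, Pi.single j 1) ^ 2 = 4 * z.2 j ^ 2 := by
    intro j
    simp [Drho, Pi.single_apply]
    ring
  rw [Finset.sum_congr rfl fun j _ => h j, ← Finset.mul_sum]
  rfl

theorem grushin_rho_rpow (hγ : 0 < γ) (p : ℝ) {z₀ : GSp N l} (hz₀ : 0 < rho γ z₀) :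
    grushin γ (fun z => rho γ z ^ p) z₀ =
      2 * p / (1 + γ) * (2 * (1 + γ) * p + Ngamma N l γ - 2) * xnorm z₀.1 ^ (2 * γ) *
        rho γ z₀ ^ (p - 1) := by
  have hD2 : ∀ v, deriv2 (fun z => rho γ z ^ p) z₀ v =
      p * rho γ z₀ ^ (p - 1) * Hrho γ z₀ v v +
        p * ((p - 1) * rho γ z₀ ^ (p - 1 - 1)) * Drho γ z₀ v ^ 2 := fun v => by
    rw [deriv2, iteratedFDeriv_two_apply, (hasFDerivAt_fderiv_rho_rpow hγ p hz₀).fderiv]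
    simp [sq, mul_assoc]
  have hS : xnorm z₀.1 ^ (2 * γ) = normSqX z₀ ^ γ := xnorm_rpow_two_mul _ _
  have hρ : rho γ z₀ = 1 / (1 + γ) ^ 2 * (normSqX z₀ ^ γ * normSqX z₀) + normSqY z₀ := by
    rw [rho, Real.rpow_one_add' (normSqX_nonneg z₀) (by positivity), mul_comm (normSqX z₀)]
  have hρ' : rho γ z₀ ^ (p - 1 - 1) * rho γ z₀ = rho γ z₀ ^ (p - 1) := by
    rw [← Real.rpow_add_one hz₀.ne', sub_add_cancel]
  simp only [grushin, hD2, hS, Finset.sum_add_distrib, ← Finset.mul_sum, sum_Hrho_fst hγ,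
    sum_Drho_fst_sq, sum_Hrho_snd, sum_Drho_snd_sq, Ngamma]
  have h1γ : (1 : ℝ) + γ ≠ 0 := by positivity
  -- the squared first derivatives recombine into `4 |x|^{2γ} ρ`, and `ρ^{p-2} ρ = ρ^{p-1}`
  linear_combination (norm := skip)
    (-4 * p * (p - 1) * normSqX z₀ ^ γ * rho γ z₀ ^ (p - 1 - 1)) * hρ +
      (4 * p * (p - 1) * normSqX z₀ ^ γ) * hρ'
  field_simp
  ring

theorem rho_pos_of_gdist_pos (hγ : 0 < γ) {z : GSp N l} (hz : 0 < gdist γ z) : 0 < rho γ z :=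
  gdist_rpow_two_add_two_mul hγ z ▸ Real.rpow_pos_of_pos hz _

theorem eventually_differentiableAt_gdist_rpow (hγ : 0 < γ) (a : ℝ) {z₀ : GSp N l}
    (hz₀ : 0 < gdist γ z₀) : ∀ᶠ z in 𝓝 z₀, DifferentiableAt ℝ (fun z => gdist γ z ^ a) z := by
  simp_rw [gdist_rpow a]
  filter_upwards [(continuous_rho hγ).continuousAt.eventually_const_lt
    (rho_pos_of_gdist_pos hγ hz₀)] with z hz
  exact (hasFDerivAt_rho_rpow hγ _ hz).differentiableAt

theorem differentiableAt_fderiv_gdist_rpow (hγ : 0 < γ) (a : ℝ) {z₀ : GSp N l}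
    (hz₀ : 0 < gdist γ z₀) : DifferentiableAt ℝ (fderiv ℝ fun z => gdist γ z ^ a) z₀ := by
  simp_rw [gdist_rpow a]
  exact (hasFDerivAt_fderiv_rho_rpow hγ _ (rho_pos_of_gdist_pos hγ hz₀)).differentiableAt

theorem grushin_gdist_rpow (hγ : 0 < γ) (a : ℝ) {z₀ : GSp N l} (hz₀ : 0 < gdist γ z₀) :
    grushin γ (fun z => gdist γ z ^ a) z₀ =
      a * (a + Ngamma N l γ - 2) * xnorm z₀.1 ^ (2 * γ) /
        ((1 + γ) ^ 2 * gdist γ z₀ ^ (2 + 2 * γ)) * gdist γ z₀ ^ a := by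
  have hρ := rho_pos_of_gdist_pos hγ hz₀
  rw [gdist_rpow_two_add_two_mul hγ]
  simp_rw [gdist_rpow]
  rw [grushin_rho_rpow hγ _ hρ, Real.rpow_sub_one hρ.ne']
  have h2γ : (2 : ℝ) + 2 * γ ≠ 0 := by positivity
  field_simp

theorem grushin_le_of_isLocalMax_sub {u φ : GSp N l → ℝ} {z₀ : GSp N l} {M : ℝ}
    (hu : ∀ᶠ z in 𝓝 z₀, DifferentiableAt ℝ u z) (hu2 : DifferentiableAt ℝ (fderiv ℝ u) z₀)
    (hφ : ∀ᶠ z in 𝓝 z₀, DifferentiableAt ℝ φ z) (hφ2 : DifferentiableAt ℝ (fderiv ℝ φ) z₀)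
    (hmax : IsLocalMax (fun z => u z - M * φ z) z₀) :
    grushin γ u z₀ ≤ M * grushin γ φ z₀ := by
  have hdiff : ∀ᶠ z in 𝓝 z₀, DifferentiableAt ℝ (fun z => u z - M * φ z) z :=
    (hu.and hφ).mono fun z h => h.1.sub (h.2.const_mul M)
  have hderiv : fderiv ℝ (fun z => u z - M * φ z) =ᶠ[𝓝 z₀]
      fun z => fderiv ℝ u z - M • fderiv ℝ φ z :=
    (hu.and hφ).mono fun z h =>
      (h.1.hasFDerivAt.sub (h.2.hasFDerivAt.const_mul M)).fderiv
  have hd2 := (hu2.hasFDerivAt.sub (hφ2.hasFDerivAt.const_smul M)).congr_of_eventuallyEq hderiv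
  have hle : ∀ v, deriv2 u z₀ v ≤ M * deriv2 φ z₀ v := fun v => by
    have := hmax.fderiv_fderiv_apply_self_nonpos hdiff hd2.differentiableAt v
    rw [hd2.fderiv] at this
    simp only [deriv2, iteratedFDeriv_two_apply]
    simpa [sub_nonpos] using this
  have hx : 0 ≤ xnorm z₀.1 ^ (2 * γ) := Real.rpow_nonneg (xnorm_nonneg _) _
  calc grushin γ u z₀
      ≤ (∑ i, M * deriv2 φ z₀ (Pi.single i 1, 0)) +
          xnorm z₀.1 ^ (2 * γ) * ∑ j, M * deriv2 φ z₀ (0, Pi.single j 1) := by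
        unfold grushin
        gcongr with i _ j _
        exacts [hle _, hle _]
    _ = M * grushin γ φ z₀ := by
        simp only [grushin, ← Finset.mul_sum]
        ring

theorem exists_isLocalMax_sub_mul_gdist_rpow_neg (hγ : 0 < γ) {b : ℝ} (hb : 0 ≤ b)
    {Ω : Set (GSp N l)} (hopen : IsOpen Ω) (hd : ∀ z ∈ Ω, 0 < gdist γ z) {ω : GSp N l → ℝ}
    (hω : Continuous ω) (hbdry : ∀ z ∈ frontier Ω, ω z ≤ 0)
    (hlim : Tendsto (fun z => ω z * gdist γ z ^ b) (comap (gdist γ) atTop) (𝓝 0))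
    {z₁ : GSp N l} (hz₁ : z₁ ∈ Ω) (hω₁ : 0 < ω z₁) :
    ∃ z₀ ∈ Ω, ∃ M : ℝ, 0 < ω z₀ ∧ ω z₀ = M * gdist γ z₀ ^ (-b) ∧
      IsLocalMax (fun z => ω z - M * gdist γ z ^ (-b)) z₀ := by
  set w := fun z => ω z * gdist γ z ^ b
  have hw : Continuous w :=
    hω.mul ((Real.continuous_rpow_const hb).comp (continuous_gdist hγ))
  have hw₁ : 0 < w z₁ := mul_pos hω₁ (Real.rpow_pos_of_pos (hd z₁ hz₁) b)
  obtain ⟨z₀, hz₀, hmax⟩ := hopen.exists_mem_isMaxOn_closure hw.continuousOn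
    (hlim.mono_left (tendsto_gdist_cocompact hγ).le_comap)
    (fun z hz => mul_nonpos_of_nonpos_of_nonneg (hbdry z hz)
      (Real.rpow_nonneg (gdist_nonneg z) b)) hz₁ hw₁
  have hωM : ∀ z ∈ Ω, ω z ≤ w z₀ * gdist γ z ^ (-b) := fun z hz => by
    rw [Real.rpow_neg (gdist_nonneg z), le_mul_inv_iff₀ (Real.rpow_pos_of_pos (hd z hz) b)]
    exact hmax (subset_closure hz)
  have hω₀ : ω z₀ = w z₀ * gdist γ z₀ ^ (-b) := by
    rw [Real.rpow_neg (gdist_nonneg z₀), mul_inv_cancel_right₀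
      (Real.rpow_pos_of_pos (hd z₀ hz₀) b).ne']
  refine ⟨z₀, hz₀, w z₀, ?_, hω₀, ?_⟩
  · exact hω₀ ▸ mul_pos (hw₁.trans_le (hmax (subset_closure hz₁)))
      (Real.rpow_pos_of_pos (hd z₀ hz₀) _)
  · filter_upwards [hopen.mem_nhds hz₀] with z hz
    linarith [hωM z hz]

end Grushin

theorem maximum_principle_unbounded_weighted_general {N l : ℕ} (γ R₀ b : ℝ) (hγ : 0 < γ)
    (hR₀ : 0 < R₀) (hb0 : 0 < b)
    (Ω : Set (GSp N l)) (hopen : IsOpen Ω)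
    (hΩ : Ω ⊆ {z | R₀ < gdist γ z})
    (ω c : GSp N l → ℝ) (hω : ContDiff ℝ 2 ω)
    (hsub : ∀ z ∈ Ω, -(grushin γ ω z) + c z * ω z ≤ 0)
    (hbdry : ∀ z ∈ frontier Ω, ω z ≤ 0)
    (hc : ∀ z : GSp N l, R₀ ≤ gdist γ z →
      -(b * (Ngamma N l γ - 2 - b) * xnorm z.1 ^ (2 * γ)) /
        ((1 + γ) ^ 2 * gdist γ z ^ (2 + 2 * γ)) < c z)
    (hlim : Tendsto (fun z => ω z * gdist γ z ^ b) (comap (gdist γ) atTop) (nhds 0)) :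
    ∀ z ∈ Ω, ω z ≤ 0 := by
  by_contra! ⟨z₁, hz₁, hω₁⟩
  have hd : ∀ z ∈ Ω, 0 < gdist γ z := fun z hz => hR₀.trans (hΩ hz)
  obtain ⟨z₀, hz₀, M, hω₀pos, hω₀, hloc⟩ := Grushin.exists_isLocalMax_sub_mul_gdist_rpow_neg hγ
    hb0.le hopen hd hω.continuous hbdry hlim hz₁ hω₁
  have hcmp : grushin γ ω z₀ ≤ M * grushin γ (fun z => gdist γ z ^ (-b)) z₀ :=
    Grushin.grushin_le_of_isLocalMax_sub
      (Eventually.of_forall fun z => (hω.differentiable (by norm_num)) z)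
      ((hω.fderiv_right (m := 1) (by norm_num)).differentiable one_ne_zero z₀)
      (Grushin.eventually_differentiableAt_gdist_rpow hγ (-b) (hd z₀ hz₀))
      (Grushin.differentiableAt_fderiv_gdist_rpow hγ (-b) (hd z₀ hz₀)) hloc
  rw [Grushin.grushin_gdist_rpow hγ (-b) (hd z₀ hz₀)] at hcmp
  have hK : grushin γ ω z₀ ≤ -(b * (Ngamma N l γ - 2 - b) * xnorm z₀.1 ^ (2 * γ)) /
      ((1 + γ) ^ 2 * gdist γ z₀ ^ (2 + 2 * γ)) * ω z₀ :=
    hcmp.trans_eq (by rw [hω₀]; ring)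
  linarith [hsub z₀ hz₀, mul_lt_mul_of_pos_right (hc z₀ (hΩ hz₀).le) hω₀pos]

/-- weighted maximum-principle comparison on an unbounded exterior domain
(case `0 < b < N_γ − 2`). -/
theorem maximum_principle_unbounded_weighted {N l : ℕ} (γ R₀ b : ℝ) (hγ : 0 < γ)
    (hR₀ : 0 < R₀) (hb0 : 0 < b) (hb : b < Ngamma N l γ - 2)
    (Ω : Set (GSp N l)) (hopen : IsOpen Ω) (hconn : IsConnected Ω)
    (hunbdd : ¬ Bornology.IsBounded Ω)
    (hΩ : Ω ⊆ {z | R₀ < gdist γ z})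
    (ω c : GSp N l → ℝ) (hω : ContDiff ℝ 2 ω)
    (hsub : ∀ z ∈ Ω, -(grushin γ ω z) + c z * ω z ≤ 0)
    (hbdry : ∀ z ∈ frontier Ω, ω z ≤ 0)
    (hc : ∀ z : GSp N l, R₀ ≤ gdist γ z →
      -(b * (Ngamma N l γ - 2 - b) * xnorm z.1 ^ (2 * γ)) /
        ((1 + γ) ^ 2 * gdist γ z ^ (2 + 2 * γ)) < c z)
    (hlim : Tendsto (fun z => ω z * gdist γ z ^ b) (comap (gdist γ) atTop) (nhds 0)) :
    ∀ z ∈ Ω, ω z ≤ 0 :=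
  maximum_principle_unbounded_weighted_general γ R₀ b hγ hR₀ hb0 Ω hopen hΩ ω c hω hsub hbdry hc
    hlim
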